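/- The k-step binary segmentation selection event {y : M^{BS}_{1:k}(y) = {b_{1:k}, d_{1:k}}} is an intersection of halfspaces through the origin, with the total number of defining linear inequalities equal to 2∑_{ℓ=1}^{k} (n − ℓ − 1); in particular, at step ℓ, if the intervals I₁,...,I_ℓ induced by b_{1:(ℓ-1)} partition {1,...,n}, then the new changepoint and direction are determined by exactly 2(n − ℓ − 1) inequalities of the form d_ℓ·g_{(s_{j_ℓ}, b_ℓ, e_{j_ℓ})}ᵀ y ≥ ± g_{(s_j, b, e_j)}ᵀ y. -/

import Mathlib

/-- Sum of the entries of `y` over the (1-indexed) data positions `a, ..., b`. -/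
noncomputable def segSum (n : ℕ) (y : Fin n → ℝ) (a b : ℕ) : ℝ :=
  ∑ i ∈ Finset.Icc a b, if h : i - 1 < n then y ⟨i - 1, h⟩ else 0

/-- Sample mean of `y` over the (1-indexed) data positions `a, ..., b`. -/
noncomputable def segMean (n : ℕ) (y : Fin n → ℝ) (a b : ℕ) : ℝ :=
  segSum n y a b / ((b : ℝ) - a + 1)

/-- CUSUM statistic `g_{(s,b,e)}ᵀ y`: the weighted difference between the sample mean of
`y_{(b+1):e}` and the sample mean of `y_{s:b}`. -/
noncomputable def cusum (n : ℕ) (s b e : ℕ) (y : Fin n → ℝ) : ℝ :=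
  Real.sqrt (1 / (1 / ((e : ℝ) - b) + 1 / ((b : ℝ) + 1 - s))) *
    (segMean n y (b + 1) e - segMean n y s b)

/-- The boundary set after `m` steps of binary segmentation with changepoints `b 0, ..., b (m-1)`:
the endpoints `0, n` together with the first `m` changepoints. -/
def bsBoundary (n m : ℕ) (b : ℕ → ℕ) : Set ℕ := {0, n} ∪ {x | ∃ i < m, x = b i}

/-- `(s, e)` (1-indexed start and end) is one of the intervals of the partition of `{1,...,n}`
induced by the first `m` changepoints: `s − 1` and `e` are adjacent boundary points. -/
def bsInterval (n m : ℕ) (b : ℕ → ℕ) (s e : ℕ) : Prop :=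
  1 ≤ s ∧ s ≤ e ∧ e ≤ n ∧ (s - 1) ∈ bsBoundary n m b ∧ e ∈ bsBoundary n m b ∧
    ∀ c ∈ bsBoundary n m b, ¬(s ≤ c ∧ c < e)

/-- The `k`-step binary segmentation selection event for the model `{b_{1:k}, d_{1:k}}`:
at each step `ℓ` (with `ℓ` previous changepoints), `b ℓ` lies in one of the current intervals
and its signed CUSUM statistic dominates, in absolute value, the CUSUM statistic at every
other candidate split point of every current interval. -/
def bsEvent (n k : ℕ) (b : ℕ → ℕ) (d : ℕ → ℝ) (y : Fin n → ℝ) : Prop :=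
  ∀ ℓ < k, ∃ s e, bsInterval n ℓ b s e ∧ s ≤ b ℓ ∧ b ℓ < e ∧
    ∀ s' e' b', bsInterval n ℓ b s' e' → s' ≤ b' → b' < e' → b' ≠ b ℓ →
      cusum n s' b' e' y ≤ d ℓ * cusum n s (b ℓ) e y ∧
      - cusum n s' b' e' y ≤ d ℓ * cusum n s (b ℓ) e y

/-! Every CUSUM statistic is a linear functional of `y`, and once `b` is fixed so are the
intervals of every step, so the event is a conjunction of homogeneous linear inequalities
`d ℓ • g_{(s, b ℓ, e)}ᵀ y ≥ ± g_{(s', b', e')}ᵀ y`. A competing split `(s', b', e')` at step `ℓ`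
is determined by `b'`, which ranges over `{1, …, n - 1}` minus the `ℓ + 1` distinct changepoints
`b 0, …, b ℓ`; this bounds the number of inequalities, and surplus rows of `Γ` are zero. -/

open Finset

lemma segSum_add (n a c : ℕ) (y z : Fin n → ℝ) :
    segSum n (y + z) a c = segSum n y a c + segSum n z a c := by
  rw [segSum, segSum, segSum, ← sum_add_distrib]
  exact sum_congr rfl fun i _ => by split <;> simp

lemma segSum_smul (n a c : ℕ) (r : ℝ) (y : Fin n → ℝ) :
    segSum n (r • y) a c = r * segSum n y a c := by
  rw [segSum, segSum, mul_sum]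
  exact sum_congr rfl fun i _ => by split <;> simp

noncomputable def cusumLinear (n s b e : ℕ) : (Fin n → ℝ) →ₗ[ℝ] ℝ where
  toFun := cusum n s b e
  map_add' y z := by simp only [cusum, segMean, segSum_add]; ring
  map_smul' r y := by simp only [cusum, segMean, segSum_smul, RingHom.id_apply, smul_eq_mul]; ring

@[simp]
lemma cusumLinear_apply (n s b e : ℕ) (y : Fin n → ℝ) : cusumLinear n s b e y = cusum n s b e y :=
  rfl

lemma Matrix.exists_mulVec_nonneg_iff {R ι σ : Type*} [CommSemiring R] [Preorder R] [Fintype ι]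
    [Fintype σ] {N : ℕ} (hN : Fintype.card ι ≤ N) (f : ι → (σ → R) →ₗ[R] R) :
    ∃ Γ : Matrix (Fin N) σ R, ∀ y, (∀ i, 0 ≤ f i y) ↔ ∀ r, 0 ≤ Γ.mulVec y r := by
  classical
  obtain ⟨e⟩ := Function.Embedding.nonempty_of_card_le (hN.trans_eq (Fintype.card_fin N).symm)
  let Γ : Matrix (Fin N) σ R := Function.extend e (LinearMap.toMatrix' (LinearMap.pi f)) 0
  refine ⟨Γ, fun y => ?_⟩
  have row (i : ι) : Γ.mulVec y (e i) = f i y := by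
    have hrow : Γ (e i) = LinearMap.toMatrix' (LinearMap.pi f) i := e.injective.extend_apply _ _ _
    rw [← LinearMap.pi_apply f y i, ← LinearMap.toMatrix'_mulVec]
    simp only [Matrix.mulVec, hrow]
  refine ⟨fun h r => ?_, fun h i => row i ▸ h (e i)⟩
  by_cases hr : ∃ i, e i = r
  · obtain ⟨i, rfl⟩ := hr
    exact (row i).symm ▸ h i
  · have hzero : Γ r = 0 := Function.extend_apply' _ _ _ hr
    simp [Matrix.mulVec, hzero]

lemma bsInterval_unique {n m : ℕ} {b : ℕ → ℕ} {s₁ e₁ s₂ e₂ c : ℕ}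
    (h₁ : bsInterval n m b s₁ e₁) (h₂ : bsInterval n m b s₂ e₂)
    (hs₁ : s₁ ≤ c) (he₁ : c < e₁) (hs₂ : s₂ ≤ c) (he₂ : c < e₂) : s₁ = s₂ ∧ e₁ = e₂ := by
  obtain ⟨-, -, -, hS₁, hE₁, hno₁⟩ := h₁
  obtain ⟨-, -, -, hS₂, hE₂, hno₂⟩ := h₂
  constructor
  · rcases lt_trichotomy s₁ s₂ with h | h | h
    · exact absurd ⟨by omega, by omega⟩ (hno₁ _ hS₂)
    · exact h
    · exact absurd ⟨by omega, by omega⟩ (hno₂ _ hS₁)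
  · rcases lt_trichotomy e₁ e₂ with h | h | h
    · exact absurd ⟨by omega, h⟩ (hno₂ _ hE₁)
    · exact h
    · exact absurd ⟨by omega, h⟩ (hno₁ _ hE₂)

def IsBSSplit (n : ℕ) (b : ℕ → ℕ) (ℓ : ℕ) : Prop :=
  ∃ s e, bsInterval n ℓ b s e ∧ s ≤ b ℓ ∧ b ℓ < e

section IsBSSplit

variable {n ℓ : ℕ} {b : ℕ → ℕ}

lemma IsBSSplit.mem_Icc (h : IsBSSplit n b ℓ) : b ℓ ∈ Icc 1 (n - 1) := by
  obtain ⟨s, e, ⟨hs, -, hen, -⟩, hsb, hbe⟩ := h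
  rw [Finset.mem_Icc]
  omega

lemma IsBSSplit.ne_of_lt (h : IsBSSplit n b ℓ) {i : ℕ} (hi : i < ℓ) : b ℓ ≠ b i := by
  obtain ⟨s, e, ⟨-, -, -, -, -, hno⟩, hsb, hbe⟩ := h
  intro hbi
  exact hno (b i) (Or.inr ⟨i, hi, rfl⟩) ⟨by omega, by omega⟩

lemma card_image_of_isBSSplit (h : ∀ i ≤ ℓ, IsBSSplit n b i) :
    #((range (ℓ + 1)).image b) = ℓ + 1 := by
  rw [card_image_of_injOn, card_range]
  intro i hi j hj hij
  simp only [coe_range, Set.mem_Iio] at hi hj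
  rcases lt_trichotomy i j with hlt | heq | hgt
  · exact absurd hij.symm ((h j (by omega)).ne_of_lt hlt)
  · exact heq
  · exact absurd hij ((h i (by omega)).ne_of_lt hgt)

end IsBSSplit

open Classical in
-- Triples `(s', b', e')`, in the argument order of `cusum`.
noncomputable def bsCompetitors (n : ℕ) (b : ℕ → ℕ) (ℓ : ℕ) : Finset (ℕ × ℕ × ℕ) :=
  (Icc 1 n ×ˢ Icc 1 n ×ˢ Icc 1 n).filter
    fun t => bsInterval n ℓ b t.1 t.2.2 ∧ t.1 ≤ t.2.1 ∧ t.2.1 < t.2.2 ∧ t.2.1 ≠ b ℓ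

section bsCompetitors

variable {n ℓ : ℕ} {b : ℕ → ℕ}

lemma mem_bsCompetitors {t : ℕ × ℕ × ℕ} :
    t ∈ bsCompetitors n b ℓ ↔
      bsInterval n ℓ b t.1 t.2.2 ∧ t.1 ≤ t.2.1 ∧ t.2.1 < t.2.2 ∧ t.2.1 ≠ b ℓ := by
  classical
  rw [bsCompetitors, mem_filter, and_iff_right_iff_imp]
  rintro ⟨⟨hs, -, hen, -⟩, hsb, hbe, -⟩
  simp only [mem_product, mem_Icc]
  omega

lemma splitPoint_mem_of_mem_bsCompetitors {t : ℕ × ℕ × ℕ} (ht : t ∈ bsCompetitors n b ℓ) :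
    t.2.1 ∈ Icc 1 (n - 1) \ (range (ℓ + 1)).image b := by
  obtain ⟨⟨hs, -, hen, -, -, hno⟩, hsb, hbe, hne⟩ := mem_bsCompetitors.1 ht
  simp only [mem_sdiff, mem_Icc, mem_image, mem_range, not_exists, not_and]
  refine ⟨by omega, fun i hi hbi => ?_⟩
  rcases Nat.lt_succ_iff_lt_or_eq.1 hi with hi | rfl
  · exact hno (b i) (Or.inr ⟨i, hi, rfl⟩) ⟨by omega, by omega⟩
  · exact hne hbi.symm

lemma splitPoint_injOn_bsCompetitors :
    Set.InjOn (fun t : ℕ × ℕ × ℕ => t.2.1) (bsCompetitors n b ℓ) := by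
  intro t₁ h₁ t₂ h₂ h
  obtain ⟨hI₁, hs₁, he₁, -⟩ := mem_bsCompetitors.1 h₁
  obtain ⟨hI₂, hs₂, he₂, -⟩ := mem_bsCompetitors.1 h₂
  simp only at h
  obtain ⟨hs, he⟩ := bsInterval_unique hI₁ hI₂ hs₁ he₁ (h ▸ hs₂) (h ▸ he₂)
  exact Prod.ext hs (Prod.ext h he)

lemma card_bsCompetitors_le (h : ∀ i ≤ ℓ, IsBSSplit n b i) :
    #(bsCompetitors n b ℓ) ≤ n - (ℓ + 1) - 1 := by
  have hle : #(bsCompetitors n b ℓ) ≤ #(Icc 1 (n - 1) \ (range (ℓ + 1)).image b) :=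
    card_le_card_of_injOn _ (fun _ ht => splitPoint_mem_of_mem_bsCompetitors ht)
      splitPoint_injOn_bsCompetitors
  have hsub : (range (ℓ + 1)).image b ⊆ Icc 1 (n - 1) := by
    simp only [image_subset_iff, mem_range]
    exact fun i hi => (h i (by omega)).mem_Icc
  rw [card_sdiff_of_subset hsub, card_image_of_isBSSplit h, Nat.card_Icc] at hle
  omega

end bsCompetitors

lemma bsEvent_iff_forall_bsCompetitors {n k : ℕ} {b : ℕ → ℕ} {d : ℕ → ℝ} {S E : ℕ → ℕ}
    (hSE : ∀ ℓ < k, bsInterval n ℓ b (S ℓ) (E ℓ) ∧ S ℓ ≤ b ℓ ∧ b ℓ < E ℓ) (y : Fin n → ℝ) :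
    bsEvent n k b d y ↔ ∀ ℓ < k, ∀ t ∈ bsCompetitors n b ℓ,
      |cusum n t.1 t.2.1 t.2.2 y| ≤ d ℓ * cusum n (S ℓ) (b ℓ) (E ℓ) y := by
  constructor
  · intro hev ℓ hℓ t ht
    obtain ⟨s, e, hI, hsb, hbe, hdom⟩ := hev ℓ hℓ
    obtain ⟨hIt, hst, het, hne⟩ := mem_bsCompetitors.1 ht
    obtain ⟨rfl, rfl⟩ := bsInterval_unique hI (hSE ℓ hℓ).1 hsb hbe (hSE ℓ hℓ).2.1 (hSE ℓ hℓ).2.2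
    obtain ⟨hup, hlow⟩ := hdom t.1 t.2.2 t.2.1 hIt hst het hne
    exact abs_le.2 ⟨by linarith, hup⟩
  · intro hdom ℓ hℓ
    refine ⟨S ℓ, E ℓ, (hSE ℓ hℓ).1, (hSE ℓ hℓ).2.1, (hSE ℓ hℓ).2.2, fun s' e' b' hI hs he hne => ?_⟩
    have := abs_le.1 (hdom ℓ hℓ (s', b', e') (mem_bsCompetitors.2 ⟨hI, hs, he, hne⟩))
    exact ⟨this.2, by linarith [this.1]⟩

theorem k_step_bs_polyhedral_general (n k : ℕ)
    (b : ℕ → ℕ) (d : ℕ → ℝ)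
    (hb : ∀ ℓ < k, ∃ s e, bsInterval n ℓ b s e ∧ s ≤ b ℓ ∧ b ℓ < e) :
    ∃ Γ : Matrix (Fin (2 * ∑ ℓ ∈ Finset.range k, (n - (ℓ + 1) - 1))) (Fin n) ℝ,
      ∀ y : Fin n → ℝ, bsEvent n k b d y ↔ ∀ i, 0 ≤ Γ.mulVec y i := by
  have hsplit : ∀ ℓ < k, ∀ i ≤ ℓ, IsBSSplit n b i := fun ℓ hℓ i hi => hb i (by omega)
  choose! S E hSE using hb
  let f (c : Σ ℓ : Fin k, bsCompetitors n b ℓ × Bool) : (Fin n → ℝ) →ₗ[ℝ] ℝ :=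
    d c.1 • cusumLinear n (S c.1) (b c.1) (E c.1) -
      (bif c.2.2 then 1 else -1 : ℝ) • cusumLinear n c.2.1.1.1 c.2.1.1.2.1 c.2.1.1.2.2
  have hcard : Fintype.card (Σ ℓ : Fin k, bsCompetitors n b ℓ × Bool) ≤
      2 * ∑ ℓ ∈ range k, (n - (ℓ + 1) - 1) := by
    simp only [Fintype.card_sigma, Fintype.card_prod, Fintype.card_coe, Fintype.card_bool]
    rw [← Fin.sum_univ_eq_sum_range, mul_sum]
    exact sum_le_sum fun ℓ _ => by
      rw [mul_comm]; exact Nat.mul_le_mul_left 2 (card_bsCompetitors_le (hsplit ℓ ℓ.2))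
  obtain ⟨Γ, hΓ⟩ := Matrix.exists_mulVec_nonneg_iff hcard f
  refine ⟨Γ, fun y => ?_⟩
  rw [← hΓ, bsEvent_iff_forall_bsCompetitors hSE]
  simp [f, Sigma.forall, Fin.forall_iff, abs_le, sub_nonneg, neg_le]

/-- The `k`-step binary segmentation selection event is an intersection of
halfspaces through the origin, i.e. equals `{y : Γy ≥ 0}` for a matrix `Γ` with exactly
`2 ∑_{ℓ=1}^{k} (n − ℓ − 1)` rows: at step `ℓ` the new changepoint and direction are
determined by exactly `2(n − ℓ − 1)` linear inequalities. -/
theorem k_step_bs_polyhedral (n k : ℕ) (hn : 3 ≤ n)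
    (b : ℕ → ℕ) (d : ℕ → ℝ) (hd : ∀ ℓ < k, d ℓ = 1 ∨ d ℓ = -1)
    (hb : ∀ ℓ < k, ∃ s e, bsInterval n ℓ b s e ∧ s ≤ b ℓ ∧ b ℓ < e) :
    ∃ Γ : Matrix (Fin (2 * ∑ ℓ ∈ Finset.range k, (n - (ℓ + 1) - 1))) (Fin n) ℝ,
      ∀ y : Fin n → ℝ, bsEvent n k b d y ↔ ∀ i, 0 ≤ Γ.mulVec y i :=
  k_step_bs_polyhedral_general n k b d hb
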